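/- arXiv:2406.08684 — 3 statements merged into one kernel-verified Lean document; each statement's English description precedes it below -/
import Mathlib

section
/- Let U be a nonprincipal ultrafilter on ℕ and define x ≾ y iff {n : x_[n] ≤_lex y_[n]} ∈ U on (2^ℕ)^ℕ. Then ≾ is strongly equitable: whenever x SE y (i.e., there exist i ≠ j with x and y agreeing off {i,j} and x(i) < y(i) < y(j) < x(j) in the lexicographic order of 2^ℕ), we have x ≾ y and not y ≾ x. -/
/-- The first `n` coordinates of `z`, sorted in nondecreasing order. -/
noncomputable def sortedSeg {Y : Type*} [LinearOrder Y] (z : ℕ → Y) (n : ℕ) : List Y :=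
  (List.ofFn fun i : Fin n => z i).insertionSort (· ≤ ·)

/-- Lexicographic comparison of lists (of equal length). -/
def listLexLE {Y : Type*} [LinearOrder Y] (l₁ l₂ : List Y) : Prop :=
  List.Lex (· < ·) l₁ l₂ ∨ l₁ = l₂

/-- Key combinatorial lemma: if sorted lists `s`, `t` satisfy
`↑s + {b,c} = ↑t + {a,d}` with `a < b ≤ c < d`, then `s <lex t`. -/
lemma lex_of_multiset {α : Type*} [LinearOrder α] {a b c d : α}
    (hab : a < b) (hbc : b ≤ c) (hcd : c < d) :
    ∀ (s t : List α), s.Pairwise (· ≤ ·) → t.Pairwise (· ≤ ·) →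
      (↑s + {b, c} : Multiset α) = ↑t + {a, d} → List.Lex (· < ·) s t := by
  intro s
  induction s with
  | nil =>
    intro t _ _ h
    exfalso
    have ha : a ∈ (↑([] : List α) + ({b, c} : Multiset α)) := by
      rw [h]
      simp
    simp [Multiset.mem_cons] at ha
    rcases ha with h1 | h1
    · exact absurd h1.symm hab.ne'
    · exact absurd h1.symm (hab.trans_le hbc).ne'
  | cons x s' ih =>
    intro t hs ht h
    cases t with
    | nil =>
      exfalso
      have hb : b ∈ (↑(([] : List α)) + ({a, d} : Multiset α)) := by
        rw [← h]; simp
      simp [Multiset.mem_cons] at hb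
      rcases hb with h1 | h1
      · exact absurd h1.symm hab.ne
      · exact absurd h1 (hbc.trans_lt hcd).ne
    | cons y t' =>
      have hxs' : ∀ z ∈ s', x ≤ z := (List.pairwise_cons.mp hs).1
      have hxy : x ≤ y := by
        have hy : y ∈ (↑(x :: s') + ({b, c} : Multiset α)) := by
          rw [h]; simp
        rw [Multiset.mem_add] at hy
        rcases hy with hy | hy
        · rw [Multiset.mem_coe, List.mem_cons] at hy
          rcases hy with hy | hy
          · exact hy.ge
          · exact hxs' _ hy
        · have hby : b ≤ y := by
            simp [Multiset.mem_cons] at hy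
            rcases hy with hy | hy
            · exact hy.ge
            · exact hbc.trans hy.ge
          have ha : a ∈ (↑(x :: s') + ({b, c} : Multiset α)) := by
            rw [h]; simp
          rw [Multiset.mem_add] at ha
          have hxa : x ≤ a := by
            rcases ha with ha | ha
            · rw [Multiset.mem_coe, List.mem_cons] at ha
              rcases ha with ha | ha
              · exact ha.ge
              · exact hxs' _ ha
            · exfalso
              simp [Multiset.mem_cons] at ha
              rcases ha with ha | ha
              · exact absurd ha hab.ne
              · exact absurd ha (hab.trans_le hbc).ne
          exact hxa.trans (hab.le.trans hby)
      rcases hxy.lt_or_eq with hlt | heq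
      · exact List.Lex.rel hlt
      · subst heq
        apply List.Lex.cons
        apply ih t' (List.pairwise_cons.mp hs).2 (List.pairwise_cons.mp ht).2
        have h' : x ::ₘ (↑s' + ({b, c} : Multiset α)) = x ::ₘ (↑t' + ({a, d} : Multiset α)) := by
          rw [← Multiset.cons_add, ← Multiset.cons_add]
          exact_mod_cast h
        exact (Multiset.cons_inj_right x).mp h'

lemma ofFn_swap_eq {α : Type*} [DecidableEq α] (f g : ℕ → α) (i j n : ℕ) (hij : i ≠ j)
    (hi : i < n) (hj : j < n) (hagree : ∀ k, k ≠ i → k ≠ j → f k = g k) :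
    (↑(List.ofFn fun k : Fin n => f k) : Multiset α) + {g i, g j}
      = (↑(List.ofFn fun k : Fin n => g k) : Multiset α) + {f i, f j} := by
  classical
  set i' : Fin n := ⟨i, hi⟩
  set j' : Fin n := ⟨j, hj⟩
  have hij' : j' ≠ i' := by
    simp [i', j', Fin.ext_iff, Ne.symm hij]
  set m : Multiset (Fin n) := ↑(List.finRange n) with hm
  have hnod : m.Nodup := by
    rw [hm, Multiset.coe_nodup]
    exact List.nodup_finRange n
  have hi'm : i' ∈ m := by simp [hm]
  have hj'm : j' ∈ m.erase i' := by
    rw [Multiset.mem_erase_of_ne hij']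
    simp [hm]
  have hdecomp : m = i' ::ₘ j' ::ₘ (m.erase i').erase j' := by
    rw [Multiset.cons_erase hj'm, Multiset.cons_erase hi'm]
  have hcoe : ∀ h : ℕ → α, (↑(List.ofFn fun k : Fin n => h k) : Multiset α)
      = Multiset.map (fun k : Fin n => h k) m := by
    intro h
    rw [List.ofFn_eq_map, hm]
    rfl
  have hrest : Multiset.map (fun k : Fin n => f k) ((m.erase i').erase j')
      = Multiset.map (fun k : Fin n => g k) ((m.erase i').erase j') := by
    apply Multiset.map_congr rfl
    intro k hk
    have hk1 : k ∈ m.erase i' ∧ k ≠ j' := by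
      constructor
      · exact Multiset.mem_of_mem_erase hk
      · exact (hnod.erase i').mem_erase_iff.mp hk |>.1
    have hk2 : k ≠ i' := (hnod.mem_erase_iff.mp hk1.1).1
    apply hagree
    · intro hki; exact hk2 (Fin.ext hki)
    · intro hkj; exact hk1.2 (Fin.ext hkj)
  rw [hcoe f, hcoe g, hdecomp, Multiset.map_cons, Multiset.map_cons,
    Multiset.map_cons, Multiset.map_cons, hrest]
  simp only [i', j']
  have : ∀ (p q r s : α) (M : Multiset α),
      (p ::ₘ q ::ₘ M) + {r, s} = (r ::ₘ s ::ₘ M) + {p, q} := by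
    intro p q r s M
    simp only [Multiset.insert_eq_cons, ← Multiset.singleton_add]
    abel
  exact this _ _ _ _ _

/-- The ultrafilter order on `(2^ℕ)^ℕ` is strongly equitable. -/
theorem sea_stmt_4 (U : Ultrafilter ℕ)
    (hU : ∀ s : Set ℕ, s.Finite → s ∉ U)
    (R : (ℕ → Lex (ℕ → Bool)) → (ℕ → Lex (ℕ → Bool)) → Prop)
    (hR : ∀ x y, R x y ↔ {n : ℕ | listLexLE (sortedSeg x n) (sortedSeg y n)} ∈ U) :
    ∀ x y : ℕ → Lex (ℕ → Bool),
      (∃ i j : ℕ, i ≠ j ∧ (∀ k, k ≠ i → k ≠ j → x k = y k) ∧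
        x i < y i ∧ y i < y j ∧ y j < x j) →
      R x y ∧ ¬ R y x := by
  classical
  intro x y ⟨i, j, hij, hagree, h1, h2, h3⟩
  -- strict lex comparison for large n
  have key : ∀ n, max i j < n → List.Lex (· < ·) (sortedSeg x n) (sortedSeg y n) := by
    intro n hn
    have hi : i < n := lt_of_le_of_lt (le_max_left i j) hn
    have hj : j < n := lt_of_le_of_lt (le_max_right i j) hn
    apply lex_of_multiset h1 h2.le h3 (sortedSeg x n) (sortedSeg y n)
    · exact List.pairwise_insertionSort _ _
    · exact List.pairwise_insertionSort _ _
    · have px : (↑(sortedSeg x n) : Multiset (Lex (ℕ → Bool))) = ↑(List.ofFn fun k : Fin n => x k) := by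
        rw [sortedSeg]
        exact Multiset.coe_eq_coe.mpr (List.perm_insertionSort _ _)
      have py : (↑(sortedSeg y n) : Multiset (Lex (ℕ → Bool))) = ↑(List.ofFn fun k : Fin n => y k) := by
        rw [sortedSeg]
        exact Multiset.coe_eq_coe.mpr (List.perm_insertionSort _ _)
      rw [px, py]
      exact ofFn_swap_eq x y i j n hij hi hj hagree
  constructor
  · rw [hR]
    have hsub : {n : ℕ | listLexLE (sortedSeg x n) (sortedSeg y n)}ᶜ ⊆ Set.Iic (max i j) := by
      intro n hn
      by_contra hle
      exact hn (Or.inl (key n (lt_of_not_ge hle)))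
    have hfin := (Set.finite_Iic (max i j)).subset hsub
    have := hU _ hfin
    rwa [Ultrafilter.compl_notMem_iff] at this
  · rw [hR]
    intro hmem
    have hsub : {n : ℕ | listLexLE (sortedSeg y n) (sortedSeg x n)} ⊆ Set.Iic (max i j) := by
      intro n hn
      by_contra hle
      have hlex := key n (lt_of_not_ge hle)
      rcases hn with hn | hn
      · exact asymm hlex hn
      · rw [hn] at hlex
        exact asymm hlex hlex
    exact hU _ ((Set.finite_Iic (max i j)).subset hsub) hmem
end

section
/- There is no strongly equitable, finitely anonymous prelinear order ≾ on 4^ℕ that is Lebesgue-measurable as a subset of 4^ℕ × 4^ℕ (with respect to the product of uniform measures). -/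
open MeasureTheory
open symmDiff

namespace Sea13

abbrev X : Type := ℕ → Fin 4

def cyl (s : Finset ℕ) (f : ℕ → Fin 4) : Set X := {x | ∀ i ∈ s, x i = f i}

lemma measurableSet_cyl (s : Finset ℕ) (f : ℕ → Fin 4) : MeasurableSet (cyl s f) := by
  have : cyl s f = ⋂ i ∈ s, (fun x : X => x i) ⁻¹' {f i} := by
    ext x; simp [cyl]
  rw [this]
  exact MeasurableSet.biInter s.countable_toSet
    (fun i _ => (measurable_pi_apply i) (measurableSet_singleton (f i)))

def Cyls : Set (Set X) := {S | ∃ s f, S = cyl s f}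

lemma isPiSystem_Cyls : IsPiSystem Cyls := by
  rintro S ⟨s, f, rfl⟩ T ⟨t, g, rfl⟩ hne
  obtain ⟨x₀, hx₀f, hx₀g⟩ := hne
  refine ⟨s ∪ t, fun i => if i ∈ s then f i else g i, ?_⟩
  ext x
  simp only [cyl, Set.mem_inter_iff, Set.mem_setOf_eq, Finset.mem_union]
  constructor
  · rintro ⟨hf, hg⟩ i hi
    by_cases hs : i ∈ s
    · simp [hs, hf i hs]
    · rcases hi with hi | hi
      · exact absurd hi hs
      · simp [hs, hg i hi]
  · intro h
    constructor
    · intro i hi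
      have := h i (Or.inl hi); simpa [hi] using this
    · intro i hi
      by_cases hs : i ∈ s
      · have := h i (Or.inl hs)
        simp only [if_pos hs] at this
        rw [this, ← hx₀f i hs, hx₀g i hi]
      · have := h i (Or.inr hi); simpa [hs] using this

lemma pi_eq : (inferInstance : MeasurableSpace X) = .generateFrom Cyls := by
  refine le_antisymm ?_ (MeasurableSpace.generateFrom_le ?_)
  · have h : ∀ i : ℕ, @Measurable X (Fin 4) (.generateFrom Cyls) _ (fun x => x i) := by
      intro i
      apply @measurable_to_countable' (Fin 4) X _ _ (.generateFrom Cyls)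
      intro a
      apply MeasurableSpace.measurableSet_generateFrom
      exact ⟨{i}, fun _ => a, by ext x; simp [cyl]⟩
    exact iSup_le fun i => (h i).comap_le
  · rintro S ⟨s, f, rfl⟩
    exact measurableSet_cyl s f

def Unif (μ : Measure X) : Prop :=
  ∀ (s : Finset ℕ) (f : ℕ → Fin 4), μ (cyl s f) = (1 / 4 : ENNReal) ^ s.card

lemma eq_of_unif {μ ν : Measure X} [IsProbabilityMeasure μ] [IsProbabilityMeasure ν]
    (hμ : Unif μ) (hν : Unif ν) : μ = ν := by
  refine ext_of_generate_finite Cyls pi_eq isPiSystem_Cyls ?_ (by simp)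
  rintro S ⟨s, f, rfl⟩
  rw [hμ, hν]

lemma mp_of_cyl {μ : Measure X} [IsProbabilityMeasure μ] (hμ : Unif μ) {F : X → X}
    (hF : Measurable F)
    (h : ∀ s f, μ (F ⁻¹' cyl s f) = (1 / 4 : ENNReal) ^ s.card) :
    MeasurePreserving F μ μ := by
  refine ⟨hF, ?_⟩
  have : IsProbabilityMeasure (μ.map F) := Measure.isProbabilityMeasure_map hF.aemeasurable
  refine eq_of_unif (fun s f => ?_) hμ
  rw [Measure.map_apply hF (measurableSet_cyl s f)]
  exact h s f

lemma mp_perm {μ : Measure X} [IsProbabilityMeasure μ] (hμ : Unif μ) (π : Equiv.Perm ℕ) :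
    MeasurePreserving (fun x : X => x ∘ π) μ μ := by
  refine mp_of_cyl hμ (measurable_pi_lambda _ fun i => measurable_pi_apply (π i)) ?_
  intro s f
  have h : (fun x : X => x ∘ π) ⁻¹' cyl s f = cyl (s.image π) (f ∘ π.symm) := by
    ext x
    simp only [cyl, Set.mem_preimage, Set.mem_setOf_eq, Finset.mem_image, Function.comp_apply]
    constructor
    · rintro hx j ⟨i, hi, rfl⟩
      rw [Equiv.symm_apply_apply]
      exact hx i hi
    · intro hx i hi
      have := hx (π i) ⟨i, hi, rfl⟩
      simpa using this
  rw [h, hμ, Finset.card_image_of_injective _ π.injective]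


/-! ### The equity swap map G -/

def e : Fin 4 × Fin 4 ≃ Fin 4 × Fin 4 := Equiv.swap (0, 3) (1, 2)

def G : X → X := fun x k =>
  if k = 0 then (e (x 0, x 1)).1 else if k = 1 then (e (x 0, x 1)).2 else x k

lemma G_zero (x : X) : G x 0 = (e (x 0, x 1)).1 := by simp [G]

lemma G_one (x : X) : G x 1 = (e (x 0, x 1)).2 := by simp [G]

lemma G_other (x : X) {k : ℕ} (h0 : k ≠ 0) (h1 : k ≠ 1) : G x k = x k := by
  simp [G, h0, h1]

lemma e_e (p : Fin 4 × Fin 4) : e (e p) = p := Equiv.swap_apply_self _ _ _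

lemma G_G (x : X) : G (G x) = x := by
  funext k
  by_cases h0 : k = 0
  · subst h0
    rw [G_zero, G_zero, G_one, e_e]
  by_cases h1 : k = 1
  · subst h1
    rw [G_one, G_zero, G_one, e_e]
  · rw [G_other _ h0 h1, G_other _ h0 h1]

lemma measurable_G : Measurable G := by
  refine measurable_pi_lambda G (fun k => ?_)
  by_cases h0 : k = 0
  · subst h0
    simp only [G_zero]
    exact (measurable_of_countable (fun p : Fin 4 × Fin 4 => (e p).1)).comp
      ((measurable_pi_apply 0).prodMk (measurable_pi_apply 1))
  by_cases h1 : k = 1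
  · subst h1
    simp only [G_one]
    exact (measurable_of_countable (fun p : Fin 4 × Fin 4 => (e p).2)).comp
      ((measurable_pi_apply 0).prodMk (measurable_pi_apply 1))
  · simp only [fun x : X => G_other x h0 h1]
    exact measurable_pi_apply k

lemma G_preimage_cyl_of_mem (t : Finset ℕ) (f : ℕ → Fin 4) (h0 : 0 ∈ t) (h1 : 1 ∈ t) :
    G ⁻¹' cyl t f =
      cyl t (fun i => if i = 0 then (e (f 0, f 1)).1 else if i = 1 then (e (f 0, f 1)).2
        else f i) := by
  ext x
  simp only [cyl, Set.mem_preimage, Set.mem_setOf_eq]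
  constructor
  · intro h i hi
    by_cases hi0 : i = 0
    · subst hi0
      have he : e (x 0, x 1) = (f 0, f 1) := by
        have := h 0 h0; have := h 1 h1
        rw [G_zero] at ‹G x 0 = f 0›; rw [G_one] at ‹G x 1 = f 1›
        exact Prod.ext ‹_› ‹_›
      have : (x 0, x 1) = e (f 0, f 1) := by rw [← he, e_e]
      simp only [if_pos rfl]
      exact congrArg Prod.fst this
    by_cases hi1 : i = 1
    · subst hi1
      have he : e (x 0, x 1) = (f 0, f 1) := by
        have h0' := h 0 h0; have h1' := h 1 h1
        rw [G_zero] at h0'; rw [G_one] at h1'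
        exact Prod.ext h0' h1'
      have : (x 0, x 1) = e (f 0, f 1) := by rw [← he, e_e]
      simp only [if_neg hi0, if_pos rfl]
      exact congrArg Prod.snd this
    · simp only [if_neg hi0, if_neg hi1]
      rw [← G_other x hi0 hi1]
      exact h i hi
  · intro h i hi
    have hx0 : x 0 = (e (f 0, f 1)).1 := by simpa using h 0 h0
    have hx1 : x 1 = (e (f 0, f 1)).2 := by simpa using h 1 h1
    have he : e (x 0, x 1) = (f 0, f 1) := by
      rw [hx0, hx1]
      calc e ((e (f 0, f 1)).1, (e (f 0, f 1)).2) = e (e (f 0, f 1)) := rfl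
        _ = (f 0, f 1) := e_e _
    by_cases hi0 : i = 0
    · subst hi0; rw [G_zero, he]
    by_cases hi1 : i = 1
    · subst hi1; rw [G_one, he]
    · rw [G_other x hi0 hi1]
      have := h i hi
      simpa [hi0, hi1] using this

lemma cyl_decomp (s : Finset ℕ) (f : ℕ → Fin 4) {i : ℕ} (hi : i ∉ s) :
    cyl s f = ⋃ a : Fin 4, cyl (insert i s) (Function.update f i a) := by
  ext x
  simp only [cyl, Set.mem_setOf_eq, Set.mem_iUnion]
  constructor
  · intro h
    refine ⟨x i, fun j hj => ?_⟩
    rcases Finset.mem_insert.mp hj with rfl | hj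
    · simp
    · have hji : j ≠ i := fun hh => hi (hh ▸ hj)
      rw [Function.update_of_ne hji]
      exact h j hj
  · rintro ⟨a, ha⟩ j hj
    have hji : j ≠ i := fun hh => hi (hh ▸ hj)
    have := ha j (Finset.mem_insert_of_mem hj)
    rwa [Function.update_of_ne hji] at this

lemma four_quarter : (4 : ENNReal) * (1 / 4) = 1 := by
  rw [one_div, ENNReal.mul_inv_cancel] <;> norm_num

lemma sum_quarter (k : ℕ) :
    ∑ _a : Fin 4, (1 / 4 : ENNReal) ^ (k + 1) = (1 / 4 : ENNReal) ^ k := by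
  rw [Finset.sum_const, Finset.card_univ, Fintype.card_fin, pow_succ, nsmul_eq_mul]
  calc (4 : ENNReal) * ((1/4) ^ k * (1/4)) = (1/4)^k * ((4 : ENNReal) * (1/4)) := by ring
    _ = (1/4)^k := by rw [four_quarter, mul_one]

lemma meas_preimage_decomp {μ : Measure X} {F : X → X} (hF : Measurable F)
    (s : Finset ℕ) (f : ℕ → Fin 4) {i : ℕ} (hi : i ∉ s) :
    μ (F ⁻¹' cyl s f) =
      ∑ a : Fin 4, μ (F ⁻¹' cyl (insert i s) (Function.update f i a)) := by
  rw [cyl_decomp s f hi, Set.preimage_iUnion, measure_iUnion, tsum_fintype]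
  · intro a b hab
    simp only [Function.onFun, Set.disjoint_left]
    intro x hxa hxb
    simp only [Set.mem_preimage, cyl, Set.mem_setOf_eq] at hxa hxb
    have ha := hxa i (Finset.mem_insert_self i s)
    have hb := hxb i (Finset.mem_insert_self i s)
    rw [Function.update_self] at ha hb
    exact hab (ha ▸ hb)
  · exact fun a => hF (measurableSet_cyl _ _)

lemma G_mp {μ : Measure X} [IsProbabilityMeasure μ] (hμ : Unif μ) :
    MeasurePreserving G μ μ := by
  have key : ∀ (t : Finset ℕ) (f : ℕ → Fin 4), 0 ∈ t → 1 ∈ t →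
      μ (G ⁻¹' cyl t f) = (1 / 4 : ENNReal) ^ t.card := by
    intro t f h0 h1
    rw [G_preimage_cyl_of_mem t f h0 h1, hμ]
  have key1 : ∀ (t : Finset ℕ) (f : ℕ → Fin 4), 1 ∈ t →
      μ (G ⁻¹' cyl t f) = (1 / 4 : ENNReal) ^ t.card := by
    intro t f h1
    by_cases h0 : 0 ∈ t
    · exact key t f h0 h1
    · rw [meas_preimage_decomp measurable_G t f h0]
      have : ∀ a : Fin 4, μ (G ⁻¹' cyl (insert 0 t) (Function.update f 0 a)) =
          (1 / 4 : ENNReal) ^ (t.card + 1) := by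
        intro a
        rw [key _ _ (Finset.mem_insert_self 0 t) (Finset.mem_insert_of_mem h1),
          Finset.card_insert_of_notMem h0]
      simp_rw [this]
      exact sum_quarter t.card
  refine mp_of_cyl hμ measurable_G ?_
  intro s f
  by_cases h1 : 1 ∈ s
  · exact key1 s f h1
  · rw [meas_preimage_decomp measurable_G s f h1]
    have : ∀ a : Fin 4, μ (G ⁻¹' cyl (insert 1 s) (Function.update f 1 a)) =
        (1 / 4 : ENNReal) ^ (s.card + 1) := by
      intro a
      rw [key1 _ _ (Finset.mem_insert_self 1 s), Finset.card_insert_of_notMem h1]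
    simp_rw [this]
    exact sum_quarter s.card


/-! ### Boxes in the product space -/

def ρn (n : ℕ) : X → (Fin n → Fin 4) := fun x i => x i

def σp (n : ℕ) : X × X → (Fin n → Fin 4) × (Fin n → Fin 4) := fun p => (ρn n p.1, ρn n p.2)

lemma measurable_ρn (n : ℕ) : Measurable (ρn n) :=
  measurable_pi_lambda (ρn n) (fun i => measurable_pi_apply (i : ℕ))

lemma measurable_σp (n : ℕ) : Measurable (σp n) :=
  ((measurable_ρn n).comp measurable_fst).prodMk ((measurable_ρn n).comp measurable_snd)

def Box (n : ℕ) (b : Finset ((Fin n → Fin 4) × (Fin n → Fin 4))) : Set (X × X) :=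
  σp n ⁻¹' ↑b

lemma measurableSet_box (n : ℕ) (b : Finset ((Fin n → Fin 4) × (Fin n → Fin 4))) :
    MeasurableSet (Box n b) :=
  (measurable_σp n) (b.finite_toSet.measurableSet)

def Boxes : Set (Set (X × X)) := {S | ∃ n b, S = Box n b}

lemma rho_preimage_singleton (n : ℕ) (v : Fin n → Fin 4) :
    ρn n ⁻¹' {v} = cyl (Finset.range n) (fun i => if h : i < n then v ⟨i, h⟩ else 0) := by
  ext x
  simp only [Set.mem_preimage, Set.mem_singleton_iff, cyl, Set.mem_setOf_eq, Finset.mem_range,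
    funext_iff, ρn]
  constructor
  · intro h i hi
    rw [dif_pos hi]
    exact h ⟨i, hi⟩
  · intro h i
    have := h i i.isLt
    rw [dif_pos i.isLt] at this
    simpa using this

lemma meas_rho_singleton {μ : Measure X} (hμ : Unif μ) (n : ℕ) (v : Fin n → Fin 4) :
    μ (ρn n ⁻¹' {v}) = (1 / 4 : ENNReal) ^ n := by
  rw [rho_preimage_singleton, hμ, Finset.card_range]

lemma box_singleton (n : ℕ) (q : (Fin n → Fin 4) × (Fin n → Fin 4)) :
    σp n ⁻¹' {q} = (ρn n ⁻¹' {q.1}) ×ˢ (ρn n ⁻¹' {q.2}) := by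
  ext p
  simp [σp, Set.mem_prod, Prod.ext_iff]

lemma meas_box {μ : Measure X} [IsProbabilityMeasure μ] (hμ : Unif μ) (n : ℕ)
    (b : Finset ((Fin n → Fin 4) × (Fin n → Fin 4))) :
    (μ.prod μ) (Box n b) = b.card * ((1 / 4 : ENNReal) ^ n * (1 / 4 : ENNReal) ^ n) := by
  classical
  induction b using Finset.induction_on with
  | empty => simp [Box]
  | @insert q b hq ih =>
    have hsplit : Box n (insert q b) = σp n ⁻¹' {q} ∪ Box n b := by
      rw [Box, Finset.coe_insert, Set.insert_eq, Set.preimage_union]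
      rfl
    have hdisj : Disjoint (σp n ⁻¹' {q}) (Box n b) := by
      rw [Set.disjoint_left]
      rintro p hp hpb
      simp only [Set.mem_preimage, Set.mem_singleton_iff] at hp
      rw [Box, Set.mem_preimage, hp] at hpb
      exact hq hpb
    rw [hsplit, measure_union hdisj (measurableSet_box n b), ih,
      Finset.card_insert_of_notMem hq, box_singleton,
      Measure.prod_prod, meas_rho_singleton hμ, meas_rho_singleton hμ]
    push_cast
    ring

lemma box_lift {n m : ℕ} (h : n ≤ m) (b : Finset ((Fin n → Fin 4) × (Fin n → Fin 4))) :
    Box n b = Box m (Finset.univ.filter (fun q => (fun i : Fin n => q.1 (Fin.castLE h i),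
      fun i : Fin n => q.2 (Fin.castLE h i)) ∈ b)) := by
  ext p
  simp only [Box, Set.mem_preimage, Finset.coe_filter, Finset.mem_univ, true_and,
    Set.mem_setOf_eq, Finset.mem_coe, σp]
  exact Iff.rfl

lemma box_inter (n : ℕ) (b b' : Finset ((Fin n → Fin 4) × (Fin n → Fin 4))) :
    Box n b ∩ Box n b' = Box n (b ∩ b') := by
  simp [Box, ← Set.preimage_inter, Finset.coe_inter]

lemma isPiSystem_Boxes : IsPiSystem Boxes := by
  rintro S ⟨n, b, rfl⟩ T ⟨m, b', rfl⟩ _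
  rcases le_total n m with h | h
  · rw [box_lift h b]
    rw [box_inter]
    exact ⟨m, _, rfl⟩
  · rw [box_lift h b']
    rw [box_inter]
    exact ⟨n, _, rfl⟩

lemma box_compl (n : ℕ) (b : Finset ((Fin n → Fin 4) × (Fin n → Fin 4))) :
    (Box n b)ᶜ = Box n (Finset.univ \ b) := by
  ext p
  simp [Box]

lemma empty_mem_boxes : (∅ : Set (X × X)) ∈ Boxes :=
  ⟨0, ∅, by simp [Box]⟩

lemma box_union (n : ℕ) (b b' : Finset ((Fin n → Fin 4) × (Fin n → Fin 4))) :
    Box n b ∪ Box n b' = Box n (b ∪ b') := by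
  ext p
  simp [Box]

lemma boxes_union {S T : Set (X × X)} (hS : S ∈ Boxes) (hT : T ∈ Boxes) : S ∪ T ∈ Boxes := by
  obtain ⟨n, b, rfl⟩ := hS
  obtain ⟨m, b', rfl⟩ := hT
  rcases le_total n m with h | h
  · rw [box_lift h b, box_union]
    exact ⟨m, _, rfl⟩
  · rw [box_lift h b', box_union]
    exact ⟨n, _, rfl⟩

lemma boxes_biUnion (K : ℕ) (g : ℕ → Set (X × X)) (hg : ∀ k, g k ∈ Boxes) :
    (⋃ k ∈ Finset.range K, g k) ∈ Boxes := by
  induction K with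
  | zero => simpa using empty_mem_boxes
  | succ K ih =>
    rw [Finset.range_add_one, Finset.set_biUnion_insert]
    exact boxes_union (hg K) ih

lemma fst_cyl_mem_boxes (s : Finset ℕ) (f : ℕ → Fin 4) :
    Prod.fst ⁻¹' cyl s f ∈ Boxes := by
  classical
  set n := s.sup id + 1 with hn
  have hlt : ∀ i ∈ s, i < n := fun i hi => Nat.lt_succ_of_le (Finset.le_sup (f := id) hi)
  refine ⟨n, Finset.univ.filter (fun q => ∀ i : Fin n, (i : ℕ) ∈ s → q.1 i = f i), ?_⟩
  ext p
  simp only [Set.mem_preimage, cyl, Set.mem_setOf_eq, Box, Finset.coe_filter, Finset.mem_univ,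
    true_and]
  constructor
  · intro h i hi
    exact h i hi
  · intro h i hi
    exact h ⟨i, hlt i hi⟩ hi

lemma snd_cyl_mem_boxes (s : Finset ℕ) (f : ℕ → Fin 4) :
    Prod.snd ⁻¹' cyl s f ∈ Boxes := by
  classical
  set n := s.sup id + 1 with hn
  have hlt : ∀ i ∈ s, i < n := fun i hi => Nat.lt_succ_of_le (Finset.le_sup (f := id) hi)
  refine ⟨n, Finset.univ.filter (fun q => ∀ i : Fin n, (i : ℕ) ∈ s → q.2 i = f i), ?_⟩
  ext p
  simp only [Set.mem_preimage, cyl, Set.mem_setOf_eq, Box, Finset.coe_filter, Finset.mem_univ,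
    true_and]
  constructor
  · intro h i hi
    exact h i hi
  · intro h i hi
    exact h ⟨i, hlt i hi⟩ hi

lemma prod_eq_gen : (inferInstance : MeasurableSpace (X × X)) = .generateFrom Boxes := by
  refine le_antisymm ?_ (MeasurableSpace.generateFrom_le ?_)
  · calc (inferInstance : MeasurableSpace (X × X))
        = MeasurableSpace.comap Prod.fst inferInstance ⊔
          MeasurableSpace.comap Prod.snd inferInstance := rfl
      _ = MeasurableSpace.comap Prod.fst (.generateFrom Cyls) ⊔
          MeasurableSpace.comap Prod.snd (.generateFrom Cyls) := by rw [← pi_eq]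
      _ = MeasurableSpace.generateFrom (Set.preimage Prod.fst '' Cyls) ⊔
          MeasurableSpace.generateFrom (Set.preimage Prod.snd '' Cyls) := by
            rw [MeasurableSpace.comap_generateFrom, MeasurableSpace.comap_generateFrom]
      _ ≤ MeasurableSpace.generateFrom Boxes := by
          refine sup_le (MeasurableSpace.generateFrom_le ?_) (MeasurableSpace.generateFrom_le ?_)
          · rintro _ ⟨_, ⟨s, f, rfl⟩, rfl⟩
            exact MeasurableSpace.measurableSet_generateFrom (fst_cyl_mem_boxes s f)
          · rintro _ ⟨_, ⟨s, f, rfl⟩, rfl⟩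
            exact MeasurableSpace.measurableSet_generateFrom (snd_cyl_mem_boxes s f)
  · rintro S ⟨n, b, rfl⟩
    exact measurableSet_box n b


/-! ### Approximation by boxes -/

lemma symmDiff_subset_aux {α : Type*} {S U B : Set α} (hU : U ⊆ S) :
    S ∆ B ⊆ (S \ U) ∪ (U ∆ B) := by
  intro z hz
  rw [Set.mem_symmDiff] at hz
  rcases hz with ⟨hzS, hzB⟩ | ⟨hzB, hzS⟩
  · by_cases hzU : z ∈ U
    · exact Or.inr (Set.mem_symmDiff.mpr (Or.inl ⟨hzU, hzB⟩))
    · exact Or.inl ⟨hzS, hzU⟩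
  · exact Or.inr (Set.mem_symmDiff.mpr (Or.inr ⟨hzB, fun h => hzS (hU h)⟩))

lemma symmDiff_biUnion_subset {α ι : Type*} (t : Finset ι) (f B : ι → Set α) :
    (⋃ k ∈ t, f k) ∆ (⋃ k ∈ t, B k) ⊆ ⋃ k ∈ t, (f k ∆ B k) := by
  intro z hz
  rw [Set.mem_symmDiff] at hz
  rcases hz with ⟨hz1, hz2⟩ | ⟨hz1, hz2⟩
  · simp only [Set.mem_iUnion] at hz1 hz2 ⊢
    obtain ⟨k, hk, hzf⟩ := hz1
    push_neg at hz2
    exact ⟨k, hk, Set.mem_symmDiff.mpr (Or.inl ⟨hzf, hz2 k hk⟩)⟩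
  · simp only [Set.mem_iUnion] at hz1 hz2 ⊢
    obtain ⟨k, hk, hzf⟩ := hz1
    push_neg at hz2
    exact ⟨k, hk, Set.mem_symmDiff.mpr (Or.inr ⟨hzf, hz2 k hk⟩)⟩

def Apx (μ2 : Measure (X × X)) (S : Set (X × X)) : Prop :=
  ∀ ε : ENNReal, 0 < ε → ∃ B ∈ Boxes, μ2 (S ∆ B) ≤ ε

lemma apx_all (μ2 : Measure (X × X)) [IsProbabilityMeasure μ2] :
    ∀ ⦃S : Set (X × X)⦄, MeasurableSet S → Apx μ2 S := by
  refine MeasurableSpace.induction_on_inter prod_eq_gen isPiSystem_Boxes ?_ ?_ ?_ ?_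
  · intro ε hε
    exact ⟨∅, empty_mem_boxes, by simp⟩
  · intro S hS ε hε
    exact ⟨S, hS, by simp⟩
  · rintro S hSm hS ε hε
    obtain ⟨B, ⟨n, b, rfl⟩, hle⟩ := hS ε hε
    refine ⟨(Box n b)ᶜ, ⟨n, _, box_compl n b⟩, ?_⟩
    rwa [compl_symmDiff_compl]
  · intro f hdisj hmeas hapx ε hε
    have hne : (∑' i, μ2 (f i)) ≠ ⊤ := by
      rw [← measure_iUnion hdisj hmeas]
      exact measure_ne_top _ _
    have htend := ENNReal.tendsto_sum_nat_add (fun i => μ2 (f i)) hne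
    have hε2 : (0 : ENNReal) < ε / 2 := ENNReal.div_pos hε.ne' (by norm_num)
    obtain ⟨K, hK⟩ : ∃ K, (∑' k, μ2 (f (k + K))) < ε / 2 :=
      (htend.eventually_lt_const hε2).exists
    set δ : ENNReal := ε / (2 * (K + 1)) with hδdef
    have hδ : 0 < δ := ENNReal.div_pos hε.ne' (by
      refine ENNReal.mul_ne_top (by norm_num) ?_
      simp)
    choose B hBmem hBle using fun k => hapx k δ hδ
    refine ⟨⋃ k ∈ Finset.range K, B k, boxes_biUnion K B hBmem, ?_⟩
    have hUsub : (⋃ k ∈ Finset.range K, f k) ⊆ ⋃ i, f i := by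
      intro z hz
      simp only [Set.mem_iUnion] at hz ⊢
      exact ⟨hz.choose, hz.choose_spec.2⟩
    have h1 : μ2 ((⋃ i, f i) \ ⋃ k ∈ Finset.range K, f k) ≤ ε / 2 := by
      have hsub : (⋃ i, f i) \ (⋃ k ∈ Finset.range K, f k) ⊆ ⋃ k, f (k + K) := by
        rintro z ⟨hz1, hz2⟩
        simp only [Set.mem_iUnion] at hz1 hz2 ⊢
        obtain ⟨i, hi⟩ := hz1
        have hiK : K ≤ i := by
          by_contra hcon
          exact hz2 ⟨i, Finset.mem_range.mpr (not_le.mp hcon), hi⟩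
        exact ⟨i - K, by rwa [Nat.sub_add_cancel hiK]⟩
      calc μ2 _ ≤ μ2 (⋃ k, f (k + K)) := measure_mono hsub
        _ ≤ ∑' k, μ2 (f (k + K)) := measure_iUnion_le _
        _ ≤ ε / 2 := hK.le
    have h2 : μ2 ((⋃ k ∈ Finset.range K, f k) ∆ (⋃ k ∈ Finset.range K, B k)) ≤ ε / 2 := by
      calc μ2 _ ≤ μ2 (⋃ k ∈ Finset.range K, (f k ∆ B k)) :=
            measure_mono (symmDiff_biUnion_subset _ _ _)
        _ ≤ ∑ k ∈ Finset.range K, μ2 (f k ∆ B k) := measure_biUnion_finset_le _ _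
        _ ≤ ∑ _k ∈ Finset.range K, δ := Finset.sum_le_sum (fun k _ => hBle k)
        _ = K * δ := by rw [Finset.sum_const, Finset.card_range, nsmul_eq_mul]
        _ ≤ (K + 1) * δ := by
            refine mul_le_mul_left ?_ δ
            exact le_self_add
        _ = ε / 2 := by
            have hne : ((K : ENNReal) + 1) ≠ 0 := by simp
            have hnt : ((K : ENNReal) + 1) ≠ ⊤ := by simp
            rw [hδdef, mul_comm (2 : ENNReal) ((K : ENNReal) + 1), div_eq_mul_inv, ← mul_assoc,
              ← div_eq_mul_inv, mul_comm ((K : ENNReal) + 1) ε,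
              mul_comm ((K : ENNReal) + 1) (2 : ENNReal),
              ENNReal.mul_div_mul_right _ _ hne hnt]
    calc μ2 ((⋃ i, f i) ∆ ⋃ k ∈ Finset.range K, B k)
        ≤ μ2 (((⋃ i, f i) \ ⋃ k ∈ Finset.range K, f k) ∪
            ((⋃ k ∈ Finset.range K, f k) ∆ (⋃ k ∈ Finset.range K, B k))) :=
          measure_mono (symmDiff_subset_aux hUsub)
      _ ≤ μ2 ((⋃ i, f i) \ ⋃ k ∈ Finset.range K, f k) +
            μ2 ((⋃ k ∈ Finset.range K, f k) ∆ (⋃ k ∈ Finset.range K, B k)) := measure_union_le _ _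
      _ ≤ ε / 2 + ε / 2 := add_le_add h1 h2
      _ = ε := ENNReal.add_halves ε


/-! ### Block swap and independence -/

def bf (n : ℕ) : ℕ → ℕ := fun i => if i < n then i + n else if i < n + n then i - n else i

lemma bf_invol (n : ℕ) : Function.Involutive (bf n) := by
  intro i
  simp only [bf]
  split_ifs <;> omega

def bswap (n : ℕ) : Equiv.Perm ℕ := Function.Involutive.toPerm (bf n) (bf_invol n)

lemma bswap_apply (n i : ℕ) : bswap n i = bf n i := rfl

lemma bswap_apply_lt {n : ℕ} {i : ℕ} (h : i < n) : bswap n i = i + n := by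
  rw [bswap_apply, bf, if_pos h]

lemma bswap_support (n : ℕ) : {i | bswap n i ≠ i}.Finite := by
  apply Set.Finite.subset (Set.finite_Iio (n + n))
  intro i hi
  simp only [Set.mem_setOf_eq, bswap_apply, bf] at hi
  by_contra hcon
  simp only [Set.mem_Iio, not_lt] at hcon
  apply hi
  rw [if_neg (by omega), if_neg (by omega)]

def Tmap (n : ℕ) : X × X → X × X := fun p => (fun i => p.1 (bswap n i), fun i => p.2 (bswap n i))

lemma Tmap_mp {μ : Measure X} [IsProbabilityMeasure μ] (hμ : Unif μ) (n : ℕ) :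
    MeasurePreserving (Tmap n) (μ.prod μ) (μ.prod μ) :=
  (mp_perm hμ (bswap n)).prod (mp_perm hμ (bswap n))

lemma indep_boxes {μ : Measure X} [IsProbabilityMeasure μ] (hμ : Unif μ) (n : ℕ)
    (b b' : Finset ((Fin n → Fin 4) × (Fin n → Fin 4))) :
    (μ.prod μ) (Box n b ∩ Tmap n ⁻¹' Box n b') =
      (μ.prod μ) (Box n b) * (μ.prod μ) (Box n b') := by
  classical
  set B : Finset ((Fin (n + n) → Fin 4) × (Fin (n + n) → Fin 4)) :=
    Finset.univ.filter (fun q =>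
      ((fun i : Fin n => q.1 (Fin.castAdd n i), fun i : Fin n => q.2 (Fin.castAdd n i)) ∈ b ∧
       ((fun i : Fin n => q.1 (Fin.natAdd n i), fun i : Fin n => q.2 (Fin.natAdd n i)) ∈ b')))
    with hB
  have hfh : ∀ (x : X), (ρn n fun j => x (bswap n j)) =
      (fun i : Fin n => x ((Fin.natAdd n i : Fin (n + n)) : ℕ)) := by
    intro x
    funext i
    show x (bswap n (i : ℕ)) = _
    rw [bswap_apply_lt i.isLt, Fin.coe_natAdd, Nat.add_comm]
  have hset : Box n b ∩ Tmap n ⁻¹' Box n b' = Box (n + n) B := by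
    ext p
    simp only [Box, Set.mem_inter_iff, Set.mem_preimage, Finset.mem_coe, hB, Finset.mem_filter,
      Finset.mem_univ, true_and, σp, Tmap]
    constructor
    · rintro ⟨h1, h2⟩
      refine ⟨h1, ?_⟩
      rwa [hfh p.1, hfh p.2] at h2
    · rintro ⟨h1, h2⟩
      refine ⟨h1, ?_⟩
      rwa [hfh p.1, hfh p.2]
  have append_eta : ∀ (u : Fin (n + n) → Fin 4),
      Fin.append (fun i : Fin n => u (Fin.castAdd n i)) (fun i : Fin n => u (Fin.natAdd n i))
        = u := by
    intro u
    funext k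
    refine Fin.addCases (fun i => ?_) (fun i => ?_) k
    · rw [Fin.append_left]
    · rw [Fin.append_right]
  have hcard : B.card = b.card * b'.card := by
    rw [← Finset.card_product]
    apply Finset.card_nbij'
      (i := fun q => ((fun i : Fin n => q.1 (Fin.castAdd n i),
                       fun i : Fin n => q.2 (Fin.castAdd n i)),
                      ((fun i : Fin n => q.1 (Fin.natAdd n i),
                        fun i : Fin n => q.2 (Fin.natAdd n i)))))
      (j := fun r => (Fin.append r.1.1 r.2.1, Fin.append r.1.2 r.2.2))
    · intro q hq
      simp only [hB, Finset.mem_coe, Finset.mem_filter] at hq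
      rw [Finset.mem_coe, Finset.mem_product]
      exact hq.2
    · rintro ⟨⟨u1, u2⟩, v1, v2⟩ hr
      rw [Finset.mem_coe, Finset.mem_product] at hr
      rw [hB, Finset.mem_coe, Finset.mem_filter]
      refine ⟨Finset.mem_univ _, ?_, ?_⟩
      · have e1 : (fun i : Fin n => Fin.append u1 v1 (Fin.castAdd n i)) = u1 := by
          funext i; exact Fin.append_left _ _ i
        have e2 : (fun i : Fin n => Fin.append u2 v2 (Fin.castAdd n i)) = u2 := by
          funext i; exact Fin.append_left _ _ i
        show ((fun i : Fin n => Fin.append u1 v1 (Fin.castAdd n i)),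
          (fun i : Fin n => Fin.append u2 v2 (Fin.castAdd n i))) ∈ b
        rw [e1, e2]
        exact hr.1
      · have e1 : (fun i : Fin n => Fin.append u1 v1 (Fin.natAdd n i)) = v1 := by
          funext i; exact Fin.append_right _ _ i
        have e2 : (fun i : Fin n => Fin.append u2 v2 (Fin.natAdd n i)) = v2 := by
          funext i; exact Fin.append_right _ _ i
        show ((fun i : Fin n => Fin.append u1 v1 (Fin.natAdd n i)),
          (fun i : Fin n => Fin.append u2 v2 (Fin.natAdd n i))) ∈ b'
        rw [e1, e2]
        exact hr.2
    · intro q hq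
      exact Prod.ext (append_eta q.1) (append_eta q.2)
    · rintro ⟨⟨u1, u2⟩, v1, v2⟩ hr
      refine Prod.ext (Prod.ext ?_ ?_) (Prod.ext ?_ ?_)
      · funext i; exact Fin.append_left _ _ i
      · funext i; exact Fin.append_left _ _ i
      · funext i; exact Fin.append_right _ _ i
      · funext i; exact Fin.append_right _ _ i
  rw [hset, meas_box hμ _ B, meas_box hμ n b, meas_box hμ n b', hcard, pow_add]
  push_cast
  ring


/-! ### Zero-one law -/

lemma subset_union_symmDiff {α : Type*} (U V : Set α) : U ⊆ V ∪ (U ∆ V) := by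
  intro z hz
  by_cases h : z ∈ V
  · exact Or.inl h
  · exact Or.inr (Set.mem_symmDiff.mpr (Or.inl ⟨hz, h⟩))

lemma toReal_symmDiff_bound {μ2 : Measure (X × X)} [IsProbabilityMeasure μ2]
    {U V : Set (X × X)} {ε : ℝ} (hε : 0 ≤ ε) (h : μ2 (U ∆ V) ≤ ENNReal.ofReal ε) :
    |(μ2 U).toReal - (μ2 V).toReal| ≤ ε := by
  have key : ∀ W W' : Set (X × X), μ2 (W ∆ W') ≤ ENNReal.ofReal ε →
      (μ2 W).toReal - (μ2 W').toReal ≤ ε := by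
    intro W W' hWW'
    have h1 : μ2 W ≤ μ2 W' + ENNReal.ofReal ε :=
      le_trans (measure_mono (subset_union_symmDiff W W'))
        (le_trans (measure_union_le _ _) (add_le_add_right hWW' _))
    have h2 : (μ2 W).toReal ≤ (μ2 W' + ENNReal.ofReal ε).toReal :=
      ENNReal.toReal_mono (by finiteness) h1
    rw [ENNReal.toReal_add (measure_ne_top _ _) ENNReal.ofReal_ne_top,
      ENNReal.toReal_ofReal hε] at h2
    linarith
  have hA := key U V h
  have hB := key V U (by rwa [symmDiff_comm])
  rw [abs_sub_le_iff]
  exact ⟨hA, hB⟩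

lemma symmDiff_inter_subset {α : Type*} (S B B' : Set α) :
    S ∆ (B ∩ B') ⊆ (S ∆ B) ∪ (S ∆ B') := by
  intro z hz
  rw [Set.mem_symmDiff] at hz
  rcases hz with ⟨hzS, hzBB⟩ | ⟨hzBB, hzS⟩
  · by_cases hB : z ∈ B
    · exact Or.inr (Set.mem_symmDiff.mpr (Or.inl ⟨hzS, fun h => hzBB ⟨hB, h⟩⟩))
    · exact Or.inl (Set.mem_symmDiff.mpr (Or.inl ⟨hzS, hB⟩))
  · exact Or.inl (Set.mem_symmDiff.mpr (Or.inr ⟨hzBB.1, hzS⟩))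

lemma zero_one {μ : Measure X} [IsProbabilityMeasure μ] (hμ : Unif μ) {S : Set (X × X)}
    (hSm : MeasurableSet S)
    (hinv : ∀ n, (μ.prod μ) (S ∆ (Tmap n ⁻¹' S)) = 0) :
    (μ.prod μ) S = 0 ∨ (μ.prod μ) S = 1 := by
  set m2 := μ.prod μ with hm2
  have hPm2 : IsProbabilityMeasure m2 := by rw [hm2]; infer_instance
  set a : ℝ := (m2 S).toReal with ha
  have key : ∀ ε : ℝ, 0 < ε → |a - a ^ 2| ≤ 4 * ε := by
    intro ε hε
    obtain ⟨B, ⟨n, b, rfl⟩, hB⟩ := apx_all m2 hSm (ENNReal.ofReal ε) (ENNReal.ofReal_pos.mpr hε)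
    have hTmp := Tmap_mp hμ n
    have hB' : m2 (S ∆ (Tmap n ⁻¹' Box n b)) ≤ ENNReal.ofReal ε := by
      calc m2 (S ∆ (Tmap n ⁻¹' Box n b))
          ≤ m2 (S ∆ (Tmap n ⁻¹' S)) + m2 ((Tmap n ⁻¹' S) ∆ (Tmap n ⁻¹' Box n b)) :=
            measure_symmDiff_le _ _ _
        _ = m2 (Tmap n ⁻¹' (S ∆ Box n b)) := by rw [hinv n, zero_add, Set.preimage_symmDiff]
        _ = m2 (S ∆ Box n b) :=
            hTmp.measure_preimage (hSm.symmDiff (measurableSet_box n b)).nullMeasurableSet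
        _ ≤ ENNReal.ofReal ε := hB
    have hBB' : m2 (S ∆ (Box n b ∩ Tmap n ⁻¹' Box n b)) ≤ ENNReal.ofReal (2 * ε) := by
      calc m2 (S ∆ (Box n b ∩ Tmap n ⁻¹' Box n b))
          ≤ m2 ((S ∆ Box n b) ∪ (S ∆ (Tmap n ⁻¹' Box n b))) :=
            measure_mono (symmDiff_inter_subset _ _ _)
        _ ≤ m2 (S ∆ Box n b) + m2 (S ∆ (Tmap n ⁻¹' Box n b)) := measure_union_le _ _
        _ ≤ ENNReal.ofReal ε + ENNReal.ofReal ε := add_le_add hB hB'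
        _ = ENNReal.ofReal (2 * ε) := by rw [two_mul, ENNReal.ofReal_add hε.le hε.le]
    have hmul : m2 (Box n b ∩ Tmap n ⁻¹' Box n b) = m2 (Box n b) * m2 (Box n b) :=
      indep_boxes hμ n b b
    set r : ℝ := (m2 (Box n b)).toReal with hr
    have h1 : |a - r| ≤ ε := toReal_symmDiff_bound hε.le hB
    have h2 : |a - r * r| ≤ 2 * ε := by
      have := toReal_symmDiff_bound (by positivity) hBB'
      rwa [hmul, ENNReal.toReal_mul] at this
    have ha1 : a ≤ 1 := by
      rw [ha]
      exact ENNReal.toReal_le_of_le_ofReal one_pos.le (by simpa using prob_le_one)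
    have hr1 : r ≤ 1 := by
      rw [hr]
      exact ENNReal.toReal_le_of_le_ofReal one_pos.le (by simpa using prob_le_one)
    have ha0 : 0 ≤ a := ENNReal.toReal_nonneg
    have hr0 : 0 ≤ r := ENNReal.toReal_nonneg
    calc |a - a ^ 2| ≤ |a - r * r| + |r * r - a ^ 2| := abs_sub_le _ _ _
      _ ≤ 2 * ε + |r - a| * |r + a| := by
          have : r * r - a ^ 2 = (r - a) * (r + a) := by ring
          rw [this, abs_mul]
          exact add_le_add h2 le_rfl
      _ ≤ 2 * ε + ε * 2 := by
          have hra : |r - a| ≤ ε := by rwa [abs_sub_comm] at h1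
          have hsum : |r + a| ≤ 2 := by
            rw [abs_of_nonneg (by linarith)]
            linarith
          have hmm : |r - a| * |r + a| ≤ ε * 2 := mul_le_mul hra hsum (abs_nonneg _) hε.le
          linarith
      _ = 4 * ε := by ring
  have haa : a = a ^ 2 := by
    by_contra hcon
    have hpos : 0 < |a - a ^ 2| := abs_pos.mpr (sub_ne_zero.mpr (fun h => hcon h))
    have := key (|a - a ^ 2| / 8) (by positivity)
    linarith
  have hcases : a = 0 ∨ a = 1 := by
    have : a * (a - 1) = 0 := by nlinarith [haa]
    rcases mul_eq_zero.mp this with h | h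
    · exact Or.inl h
    · exact Or.inr (by linarith)
  rcases hcases with h0 | h1
  · left
    have := (ENNReal.toReal_eq_zero_iff (m2 S)).mp h0
    exact this.resolve_right (measure_ne_top m2 S)
  · right
    have hfin : m2 S ≠ ⊤ := measure_ne_top m2 S
    have : m2 S = ENNReal.ofReal a := by rw [ha, ENNReal.ofReal_toReal hfin]
    rw [this, h1]
    simp

end Sea13

open Sea13

/-- There is no strongly equitable, finitely anonymous prelinear order on `4^ℕ`
which is Lebesgue-measurable (i.e. measurable with respect to the completion of
the product of the uniform product measures) as a subset of `4^ℕ × 4^ℕ`. -/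
theorem sea_stmt_13 (μ : Measure (ℕ → Fin 4)) [IsProbabilityMeasure μ]
    (hμ : ∀ (s : Finset ℕ) (f : ℕ → Fin 4),
      μ {x : ℕ → Fin 4 | ∀ i ∈ s, x i = f i} = (1 / 4 : ENNReal) ^ s.card) :
    ¬ ∃ R : (ℕ → Fin 4) → (ℕ → Fin 4) → Prop,
      Reflexive R ∧ Transitive R ∧ Total R ∧
      (∀ (π : Equiv.Perm ℕ), {n : ℕ | π n ≠ n}.Finite →
        ∀ x : ℕ → Fin 4, R x (x ∘ π) ∧ R (x ∘ π) x) ∧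
      (∀ x y : ℕ → Fin 4,
        (∃ i j : ℕ, (∀ k, k ≠ i → k ≠ j → x k = y k) ∧
          x i < y i ∧ y i < y j ∧ y j < x j) →
        R x y ∧ ¬ R y x) ∧
      NullMeasurableSet {p : (ℕ → Fin 4) × (ℕ → Fin 4) | R p.1 p.2} (μ.prod μ) := by
  rintro ⟨R, hrefl, htrans, htot, hanon, hse, hmeas⟩
  have hU : Unif μ := hμ
  set m2 := μ.prod μ with hm2
  set A : Set (X × X) := {p | R p.1 p.2} with hA
  set P : Set (X × X) := {p | R p.1 p.2 ∧ ¬ R p.2 p.1} with hPdef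
  have hswapmp : MeasurePreserving Prod.swap m2 m2 := Measure.measurePreserving_swap
  have hAnm : NullMeasurableSet A m2 := hmeas
  have hAswap : NullMeasurableSet (Prod.swap ⁻¹' A) m2 :=
    hAnm.preimage hswapmp.quasiMeasurePreserving
  have hPA : P = A \ (Prod.swap ⁻¹' A) := by
    ext p
    simp [hPdef, hA, Prod.swap]
  have hPnm : NullMeasurableSet P m2 := by
    rw [hPA]; exact hAnm.diff hAswap
  obtain ⟨S, hSsub, hSm, hSae⟩ := hPnm.exists_measurable_subset_ae_eq
  have hsymm0 : m2 (S ∆ P) = 0 := measure_symmDiff_eq_zero_iff.mpr hSae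
  -- invariance of P under the block swaps
  have Rπ : ∀ (x y : ℕ → Fin 4) (n : ℕ),
      R (fun i => x (bswap n i)) (fun i => y (bswap n i)) ↔ R x y := by
    intro x y n
    have hx := hanon (bswap n) (bswap_support n) x
    have hy := hanon (bswap n) (bswap_support n) y
    constructor
    · intro h
      exact htrans (htrans hx.1 h) hy.2
    · intro h
      exact htrans (htrans hx.2 h) hy.1
  have hPinv : ∀ n, Tmap n ⁻¹' P = P := by
    intro n
    ext p
    simp only [Set.mem_preimage, hPdef, Set.mem_setOf_eq, Tmap]
    exact and_congr (Rπ p.1 p.2 n) (not_congr (Rπ p.2 p.1 n))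
  have hinvS : ∀ n, m2 (S ∆ (Tmap n ⁻¹' S)) = 0 := by
    intro n
    have hTmp := Tmap_mp hU n
    have hsub : S ∆ (Tmap n ⁻¹' S) ⊆ (S ∆ P) ∪ Tmap n ⁻¹' (S ∆ P) := by
      intro z hz
      rw [Set.mem_symmDiff] at hz
      rcases hz with ⟨hzS, hzT⟩ | ⟨hzT, hzS⟩
      · by_cases hzP : z ∈ P
        · refine Or.inr ?_
          have : z ∈ Tmap n ⁻¹' P := by rw [hPinv n]; exact hzP
          exact Set.mem_symmDiff.mpr (Or.inr ⟨this, hzT⟩)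
        · exact Or.inl (Set.mem_symmDiff.mpr (Or.inl ⟨hzS, hzP⟩))
      · by_cases hzP : z ∈ P
        · exact Or.inl (Set.mem_symmDiff.mpr (Or.inr ⟨hzP, hzS⟩))
        · refine Or.inr ?_
          have : z ∉ Tmap n ⁻¹' P := by rw [hPinv n]; exact hzP
          exact Set.mem_symmDiff.mpr (Or.inl ⟨hzT, this⟩)
    have hpre : m2 (Tmap n ⁻¹' (S ∆ P)) = 0 := by
      rw [hTmp.measure_preimage (NullMeasurableSet.of_null hsymm0)]
      exact hsymm0
    refine le_antisymm ?_ (zero_le)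
    calc m2 (S ∆ (Tmap n ⁻¹' S)) ≤ m2 ((S ∆ P) ∪ Tmap n ⁻¹' (S ∆ P)) := measure_mono hsub
      _ ≤ m2 (S ∆ P) + m2 (Tmap n ⁻¹' (S ∆ P)) := measure_union_le _ _
      _ = 0 := by rw [hsymm0, hpre, add_zero]
  have hPS : m2 P = m2 S := (measure_congr hSae).symm
  set Q : Set (X × X) := Prod.swap ⁻¹' P with hQdef
  have hQnm : NullMeasurableSet Q m2 := hPnm.preimage hswapmp.quasiMeasurePreserving
  have hQP : m2 Q = m2 P := hswapmp.measure_preimage hPnm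
  have hdisj : Disjoint P Q := by
    rw [Set.disjoint_left]
    rintro p ⟨h1, h2⟩ hq
    rw [hQdef, Set.mem_preimage] at hq
    exact h2 hq.1
  have hP0 : m2 P = 0 := by
    rcases zero_one hU hSm hinvS with h | h
    · rw [hPS, h]
    · exfalso
      have hunion : m2 (P ∪ Q) = m2 P + m2 Q := measure_union₀ hQnm hdisj.aedisjoint
      have h2 : m2 (P ∪ Q) = 2 := by
        rw [hunion, hQP, hPS, h]; norm_num
      have hle : m2 (P ∪ Q) ≤ 1 := prob_le_one
      rw [h2] at hle
      norm_num at hle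
  have hQ0 : m2 Q = 0 := by rw [hQP, hP0]
  have hPQ0 : m2 (P ∪ Q) = 0 := by
    refine le_antisymm ?_ (zero_le)
    calc m2 (P ∪ Q) ≤ m2 P + m2 Q := measure_union_le _ _
      _ = 0 := by rw [hP0, hQ0, add_zero]
  -- the equity contradiction
  set f : ℕ → Fin 4 := fun i => if i = 0 then 0 else 3 with hf
  set Y : Set X := cyl {0, 1} f with hY
  have hYmeas : μ Y = (1 / 4 : ENNReal) ^ 2 := by
    rw [hY]
    have := hU {0, 1} f
    rwa [show ({0, 1} : Finset ℕ).card = 2 from by decide] at this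
  set W : Set (X × X) := (Set.univ ×ˢ Y) \ (P ∪ Q) with hW
  have hWm : m2 W = (1 / 4 : ENNReal) ^ 2 := by
    rw [hW, measure_diff_null hPQ0, hm2, Measure.prod_prod, measure_univ, one_mul, hYmeas]
  have hWnm : NullMeasurableSet W m2 :=
    (MeasurableSet.univ.prod (measurableSet_cyl _ _)).nullMeasurableSet.diff
      (NullMeasurableSet.of_null hPQ0)
  set H : X × X → X × X := fun p => (p.1, G p.2) with hH
  have hHmp : MeasurePreserving H m2 m2 := (MeasurePreserving.id μ).prod (G_mp hU)
  have hHsub : H ⁻¹' W ⊆ P := by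
    rintro ⟨x, y⟩ hp
    rw [Set.mem_preimage, hW, Set.mem_diff] at hp
    obtain ⟨⟨-, hYmem⟩, hnPQ⟩ := hp
    rw [hY] at hYmem
    have hz0 : G y 0 = 0 := by
      have := hYmem 0 (by decide)
      simpa [hf] using this
    have hz1 : G y 1 = 3 := by
      have := hYmem 1 (by decide)
      simpa [hf] using this
    have hind : R x (G y) ∧ R (G y) x := by
      rcases htot x (G y) with h | h
      · refine ⟨h, ?_⟩
        by_contra hn
        exact hnPQ (Or.inl ⟨h, hn⟩)
      · refine ⟨?_, h⟩
        by_contra hn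
        exact hnPQ (Or.inr ⟨h, hn⟩)
    have he : e (0, 3) = ((1 : Fin 4), (2 : Fin 4)) := Equiv.swap_apply_left _ _
    have hGz0 : G (G y) 0 = 1 := by
      rw [G_zero, hz0, hz1, he]
    have hGz1 : G (G y) 1 = 2 := by
      rw [G_one, hz0, hz1, he]
    have hstar : R (G y) (G (G y)) ∧ ¬ R (G (G y)) (G y) := by
      refine hse (G y) (G (G y)) ⟨0, 1, ?_, ?_, ?_, ?_⟩
      · intro k hk0 hk1
        exact (G_other (G y) hk0 hk1).symm
      · rw [hz0, hGz0]; decide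
      · rw [hGz0, hGz1]; decide
      · rw [hGz1, hz1]; decide
    rw [G_G y] at hstar
    refine ⟨htrans hind.1 hstar.1, ?_⟩
    intro hyx
    exact hstar.2 (htrans hyx hind.1)
  have h1 : m2 (H ⁻¹' W) = m2 W := hHmp.measure_preimage hWnm
  have h2 : m2 (H ⁻¹' W) ≤ m2 P := measure_mono hHsub
  rw [h1, hWm, hP0] at h2
  have : (1 / 4 : ENNReal) ^ 2 = 0 := le_antisymm h2 (zero_le)
  exact pow_ne_zero 2 (by simp : (1 / 4 : ENNReal) ≠ 0) this
end

section
/- Given a linear order ⊑ on the set of Vitali (E₀-) equivalence classes of 2^ℕ, define x ≾ y on 4^ℕ by: x ≾ y iff either [x]_{E_fin} ⊏ [y]_{E_fin}, or [x]_{E_fin} = [y]_{E_fin} and x ⪍_n y for all sufficiently large n (where ⪍_n compares sorted length-n initial segments lexicographically). Then ≾ is a prelinear order that is finitely anonymous and strongly equitable. -/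
section Aux

variable {Y : Type*} [LinearOrder Y]

lemma sea_lex_iff {l₁ l₂ : List Y} : List.Lex (· < ·) l₁ l₂ ↔ l₁ < l₂ := Iff.rfl

lemma sea_le_iff {l₁ l₂ : List Y} : l₁ ≤ l₂ ↔ List.Lex (· < ·) l₁ l₂ ∨ l₁ = l₂ := by
  rw [le_iff_lt_or_eq, sea_lex_iff]

lemma sea_listLexLE_iff {l₁ l₂ : List Y} : listLexLE l₁ l₂ ↔ l₁ ≤ l₂ := by
  rw [sea_le_iff, listLexLE]

lemma sea_insert_le_insert (a : Y) : ∀ l₁ l₂ : List Y, l₁.length = l₂.length → l₁ ≤ l₂ →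
    List.orderedInsert (· ≤ ·) a l₁ ≤ List.orderedInsert (· ≤ ·) a l₂
  | [], [], _, _ => le_rfl
  | [], _ :: _, hlen, _ => by simp at hlen
  | _ :: _, [], hlen, _ => by simp at hlen
  | x :: xs, y :: ys, hlen, h => by
    have hlen' : xs.length = ys.length := by simpa using hlen
    have key : x < y ∨ (x = y ∧ xs ≤ ys) := by
      rcases sea_le_iff.mp h with hlex | heq
      · cases hlex with
        | rel h' => exact Or.inl h'
        | cons h' => exact Or.inr ⟨rfl, le_of_lt (sea_lex_iff.mp h')⟩
      · obtain ⟨h1, h2⟩ := List.cons.injEq .. ▸ heq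
        exact Or.inr ⟨h1, le_of_eq h2⟩
    have hxley : x ≤ y := by rcases key with h' | ⟨h', _⟩ <;> simp [le_of_lt, h']
    by_cases hax : a ≤ x <;> by_cases hay : a ≤ y
    · simp only [List.orderedInsert, if_pos hax, if_pos hay]
      exact List.cons_le_cons a h
    · exact absurd (le_trans hax hxley) hay
    · simp only [List.orderedInsert, if_neg hax, if_pos hay]
      exact le_of_lt (sea_lex_iff.mp (List.Lex.rel (lt_of_not_ge hax)))
    · simp only [List.orderedInsert, if_neg hax, if_neg hay]
      rcases key with h' | ⟨h', h''⟩
      · exact le_of_lt (sea_lex_iff.mp (List.Lex.rel h'))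
      · subst h'
        exact List.cons_le_cons x (sea_insert_le_insert a xs ys hlen' h'')

/-- Sort a multiset in nondecreasing order. -/
noncomputable def msort (s : Multiset Y) : List Y := s.sort (· ≤ ·)

lemma sea_msort_coe (s : Multiset Y) : (↑(msort s) : Multiset Y) = s :=
  Multiset.sort_eq _ _

lemma sea_msort_sorted (s : Multiset Y) : (msort s).Pairwise (· ≤ ·) :=
  Multiset.pairwise_sort _ _

lemma sea_msort_length (s : Multiset Y) : (msort s).length = Multiset.card s :=
  Multiset.length_sort _

lemma sea_msort_inj {s t : Multiset Y} (h : msort s = msort t) : s = t := by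
  rw [← sea_msort_coe s, ← sea_msort_coe t, h]

lemma sea_msort_cons (a : Y) (s : Multiset Y) :
    msort (a ::ₘ s) = List.orderedInsert (· ≤ ·) a (msort s) := by
  refine List.Perm.eq_of_pairwise' (sea_msort_sorted _)
    (List.Pairwise.orderedInsert a _ (sea_msort_sorted s)) ?_
  apply Multiset.coe_eq_coe.mp
  rw [sea_msort_coe]
  have h1 : List.Perm (List.orderedInsert (· ≤ ·) a (msort s)) (a :: msort s) :=
    List.perm_orderedInsert _ a _
  rw [Multiset.coe_eq_coe.mpr h1, ← Multiset.cons_coe, sea_msort_coe]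

lemma sea_msort_add_le (u : Multiset Y) : ∀ s t : Multiset Y,
    Multiset.card s = Multiset.card t → msort s ≤ msort t →
    msort (s + u) ≤ msort (t + u) := by
  induction u using Multiset.induction_on with
  | empty => intro s t _ h; simpa using h
  | cons a u ih =>
    intro s t hcard h
    rw [Multiset.add_cons, Multiset.add_cons, sea_msort_cons, sea_msort_cons]
    apply sea_insert_le_insert
    · rw [sea_msort_length, sea_msort_length, Multiset.card_add, Multiset.card_add, hcard]
    · exact ih s t hcard h

lemma sea_msort_add_lt (u : Multiset Y) (s t : Multiset Y)
    (hcard : Multiset.card s = Multiset.card t) (h : msort s < msort t) :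
    msort (s + u) < msort (t + u) := by
  refine lt_of_le_of_ne (sea_msort_add_le u s t hcard (le_of_lt h)) ?_
  intro heq
  have : s + u = t + u := sea_msort_inj heq
  have hst : s = t := by
    have := add_right_cancel this
    exact this
  exact absurd (hst ▸ h) (lt_irrefl _)

lemma sea_sortedSeg_eq (z : ℕ → Y) (n : ℕ) :
    sortedSeg z n = msort ((Multiset.range n).map z) := by
  refine List.Perm.eq_of_pairwise' (List.pairwise_insertionSort _ _) (sea_msort_sorted _) ?_
  have h1 : (List.ofFn fun i : Fin n => z i) = (List.range n).map z := by
    apply List.ext_getElem (by simp)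
    simp
  refine List.Perm.trans (List.perm_insertionSort _ _) ?_
  apply Multiset.coe_eq_coe.mp
  rw [sea_msort_coe, h1, ← Multiset.coe_range, Multiset.map_coe]

lemma sea_tail_decomp {x y : ℕ → Y} {M : ℕ} (hxy : ∀ k ≥ M, x k = y k) :
    ∀ n, M ≤ n → ∃ T : Multiset Y,
      (Multiset.range n).map x = (Multiset.range M).map x + T ∧
      (Multiset.range n).map y = (Multiset.range M).map y + T := by
  intro n hn
  induction n, hn using Nat.le_induction with
  | base => exact ⟨0, by simp, by simp⟩
  | succ n hn ih =>
    obtain ⟨T, h1, h2⟩ := ih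
    refine ⟨x n ::ₘ T, ?_, ?_⟩
    · rw [Multiset.range_succ, Multiset.map_cons, h1, Multiset.add_cons]
    · rw [Multiset.range_succ, Multiset.map_cons, h2, Multiset.add_cons, hxy n hn]

lemma sea_stab {x y : ℕ → Y} {M : ℕ} (hxy : ∀ k ≥ M, x k = y k) :
    (∀ n ≥ M, sortedSeg x n < sortedSeg y n) ∨
    (∀ n ≥ M, sortedSeg x n = sortedSeg y n) ∨
    (∀ n ≥ M, sortedSeg y n < sortedSeg x n) := by
  have hcard : Multiset.card ((Multiset.range M).map x)
      = Multiset.card ((Multiset.range M).map y) := by simp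
  rcases lt_trichotomy (msort ((Multiset.range M).map x))
    (msort ((Multiset.range M).map y)) with h | h | h
  · left
    intro n hn
    obtain ⟨T, h1, h2⟩ := sea_tail_decomp hxy n hn
    rw [sea_sortedSeg_eq, sea_sortedSeg_eq, h1, h2]
    exact sea_msort_add_lt T _ _ hcard h
  · right; left
    intro n hn
    obtain ⟨T, h1, h2⟩ := sea_tail_decomp hxy n hn
    rw [sea_sortedSeg_eq, sea_sortedSeg_eq, h1, h2, sea_msort_inj h]
  · right; right
    intro n hn
    obtain ⟨T, h1, h2⟩ := sea_tail_decomp hxy n hn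
    rw [sea_sortedSeg_eq, sea_sortedSeg_eq, h1, h2]
    exact sea_msort_add_lt T _ _ hcard.symm h

lemma sea_bound_of_finite {x y : ℕ → Y} (h : {n : ℕ | x n ≠ y n}.Finite) :
    ∃ M : ℕ, ∀ k ≥ M, x k = y k := by
  obtain ⟨M, hM⟩ := h.bddAbove
  refine ⟨M + 1, fun k hk => ?_⟩
  by_contra hne
  exact absurd (hM hne) (by omega)

end Aux

/-- Given a linear order on `4^ℕ / E_fin` (presented by a map `c` into a linear
order `L`, injective on `E_fin`-classes), ordering points first by their class
and then by eventual comparison of sorted initial segments yields a strongly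
equitable, finitely anonymous prelinear order on `4^ℕ`. -/
theorem sea_stmt_15 (L : Type*) [LinearOrder L] (c : (ℕ → Fin 4) → L)
    (hc : ∀ x y : ℕ → Fin 4, c x = c y ↔ {n : ℕ | x n ≠ y n}.Finite)
    (R : (ℕ → Fin 4) → (ℕ → Fin 4) → Prop)
    (hR : ∀ x y, R x y ↔ c x < c y ∨
      (c x = c y ∧ ∃ N : ℕ, ∀ n ≥ N, listLexLE (sortedSeg x n) (sortedSeg y n))) :
    Reflexive R ∧ Transitive R ∧ Total R ∧
    (∀ (π : Equiv.Perm ℕ), {n : ℕ | π n ≠ n}.Finite →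
      ∀ x : ℕ → Fin 4, R x (x ∘ π) ∧ R (x ∘ π) x) ∧
    (∀ x y : ℕ → Fin 4,
      (∃ i j : ℕ, (∀ k, k ≠ i → k ≠ j → x k = y k) ∧
        x i < y i ∧ y i < y j ∧ y j < x j) →
      R x y ∧ ¬ R y x) := by
  have hR' : ∀ x y, R x y ↔ c x < c y ∨
      (c x = c y ∧ ∃ N : ℕ, ∀ n ≥ N, sortedSeg x n ≤ sortedSeg y n) := by
    intro x y
    rw [hR]
    simp only [sea_listLexLE_iff]
  refine ⟨?_, ?_, ?_, ?_, ?_⟩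
  · -- Reflexive
    intro x
    exact (hR' x x).mpr (Or.inr ⟨rfl, 0, fun n _ => le_rfl⟩)
  · -- Transitive
    intro x y z hxy hyz
    rcases (hR' x y).mp hxy with h1 | ⟨h1, N1, hN1⟩ <;>
      rcases (hR' y z).mp hyz with h2 | ⟨h2, N2, hN2⟩
    · exact (hR' x z).mpr (Or.inl (lt_trans h1 h2))
    · exact (hR' x z).mpr (Or.inl (h2 ▸ h1))
    · exact (hR' x z).mpr (Or.inl (h1 ▸ h2))
    · refine (hR' x z).mpr (Or.inr ⟨h1.trans h2, max N1 N2, fun n hn => ?_⟩)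
      exact le_trans (hN1 n (le_trans (le_max_left _ _) hn))
        (hN2 n (le_trans (le_max_right _ _) hn))
  · -- Total
    intro x y
    rcases lt_trichotomy (c x) (c y) with h | h | h
    · exact Or.inl ((hR' x y).mpr (Or.inl h))
    · obtain ⟨M, hM⟩ := sea_bound_of_finite ((hc x y).mp h)
      rcases sea_stab hM with hs | hs | hs
      · exact Or.inl ((hR' x y).mpr (Or.inr ⟨h, M, fun n hn => le_of_lt (hs n hn)⟩))
      · exact Or.inl ((hR' x y).mpr (Or.inr ⟨h, M, fun n hn => le_of_eq (hs n hn)⟩))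
      · exact Or.inr ((hR' y x).mpr (Or.inr ⟨h.symm, M, fun n hn => le_of_lt (hs n hn)⟩))
    · exact Or.inr ((hR' y x).mpr (Or.inl h))
  · -- Finitely anonymous
    intro π hπ x
    have hfin : {n : ℕ | x n ≠ (x ∘ π) n}.Finite := by
      apply hπ.subset
      intro n hn
      simp only [Set.mem_setOf_eq, Function.comp_apply] at hn ⊢
      intro hcon
      exact hn (by rw [hcon])
    have hceq : c x = c (x ∘ π) := (hc x (x ∘ π)).mpr hfin
    obtain ⟨M, hM⟩ := sea_bound_of_finite (x := fun n => π n) (y := id) (by simpa using hπ)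
    have hMπ : ∀ k ≥ M, π k = k := fun k hk => hM k hk
    have hseg : ∀ n ≥ M, sortedSeg (x ∘ π) n = sortedSeg x n := by
      intro n hn
      have hmem : ∀ i < n, π i < n := by
        intro i hi
        by_contra hcon
        push_neg at hcon
        have h1 : π (π i) = π i := hMπ (π i) (le_trans hn hcon)
        have h2 : π i = i := π.injective h1
        omega
      have hfs : Finset.map π.toEmbedding (Finset.range n) = Finset.range n := by
        apply Finset.eq_of_subset_of_card_le
        · intro k hk
          simp only [Finset.mem_map, Finset.mem_range] at hk ⊢
          obtain ⟨i, hi, rfl⟩ := hk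
          exact hmem i hi
        · rw [Finset.card_map]
      have hms : (Multiset.range n).map (fun k => π k) = Multiset.range n := by
        have := congrArg Finset.val hfs
        rwa [Finset.map_val, Finset.range_val] at this
      rw [sea_sortedSeg_eq, sea_sortedSeg_eq]
      congr 1
      calc (Multiset.range n).map (x ∘ π)
          = ((Multiset.range n).map (fun k => π k)).map x := by
            rw [Multiset.map_map]
        _ = (Multiset.range n).map x := by rw [hms]
    constructor
    · exact (hR' x (x ∘ π)).mpr (Or.inr ⟨hceq, M, fun n hn => le_of_eq (hseg n hn).symm⟩)
    · exact (hR' (x ∘ π) x).mpr (Or.inr ⟨hceq.symm, M, fun n hn => le_of_eq (hseg n hn)⟩)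
  · -- Strongly equitable
    intro x y ⟨i, j, hoff, h1, h2, h3⟩
    have hij : i ≠ j := by
      intro h
      subst h
      exact absurd h2 (lt_irrefl _)
    have hceq : c x = c y := by
      apply (hc x y).mpr
      apply Set.Finite.subset ((Set.finite_singleton j).insert i)
      intro k hk
      simp only [Set.mem_setOf_eq] at hk
      by_contra hcon
      simp only [Set.mem_insert_iff, Set.mem_singleton_iff, not_or] at hcon
      exact hk (hoff k hcon.1 hcon.2)
    set M : ℕ := max i j + 1 with hMdef
    have hiM : i < M := by omega
    have hjM : j < M := by omega
    have hagree : ∀ k ≥ M, x k = y k := by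
      intro k hk
      exact hoff k (by omega) (by omega)
    -- decompose range M
    set s : Multiset ℕ := ((Multiset.range M).erase i).erase j with hs
    have hirange : i ∈ Multiset.range M := Multiset.mem_range.mpr hiM
    have hjrange : j ∈ (Multiset.range M).erase i :=
      (Multiset.mem_erase_of_ne hij.symm).mpr (Multiset.mem_range.mpr hjM)
    have hdecomp : Multiset.range M = i ::ₘ j ::ₘ s := by
      rw [hs, Multiset.cons_erase hjrange, Multiset.cons_erase hirange]
    have hsnoti : i ∉ s := by
      intro hmem
      have h' : i ∈ (Multiset.range M).erase i :=
        Multiset.erase_subset _ _ hmem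
      exact (Multiset.nodup_range M).not_mem_erase h'
    have hsnotj : j ∉ s := by
      intro hmem
      exact ((Multiset.nodup_range M).erase i).not_mem_erase hmem
    have hmapeq : s.map x = s.map y := by
      apply Multiset.map_congr rfl
      intro k hk
      refine hoff k ?_ ?_ <;> intro h <;> subst h
      · exact hsnoti hk
      · exact hsnotj hk
    have hA : (Multiset.range M).map x = (x i ::ₘ x j ::ₘ 0) + s.map x := by
      rw [hdecomp]
      simp [Multiset.cons_add]
    have hB : (Multiset.range M).map y = (y i ::ₘ y j ::ₘ 0) + s.map x := by
      rw [hdecomp, hmapeq]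
      simp [Multiset.cons_add]
    have hpairlt : msort ((x i ::ₘ x j ::ₘ 0) : Multiset (Fin 4)) <
        msort ((y i ::ₘ y j ::ₘ 0) : Multiset (Fin 4)) := by
      have e1 : msort ((x i ::ₘ x j ::ₘ 0) : Multiset (Fin 4)) = [x i, x j] := by
        rw [sea_msort_cons]
        have : msort ((x j ::ₘ 0) : Multiset (Fin 4)) = [x j] := by
          show msort ({x j} : Multiset (Fin 4)) = [x j]
          exact Multiset.sort_singleton _ _
        rw [this]
        simp [List.orderedInsert, if_pos (le_of_lt (lt_trans h1 (lt_trans h2 h3)))]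
      have e2 : msort ((y i ::ₘ y j ::ₘ 0) : Multiset (Fin 4)) = [y i, y j] := by
        rw [sea_msort_cons]
        have : msort ((y j ::ₘ 0) : Multiset (Fin 4)) = [y j] := by
          show msort ({y j} : Multiset (Fin 4)) = [y j]
          exact Multiset.sort_singleton _ _
        rw [this]
        simp [List.orderedInsert, if_pos (le_of_lt h2)]
      rw [e1, e2]
      exact sea_lex_iff.mp (List.Lex.rel h1)
    have hMlt : msort ((Multiset.range M).map x) < msort ((Multiset.range M).map y) := by
      rw [hA, hB]
      exact sea_msort_add_lt _ _ _ (by simp) hpairlt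
    have hstrict : ∀ n ≥ M, sortedSeg x n < sortedSeg y n := by
      intro n hn
      obtain ⟨T, hT1, hT2⟩ := sea_tail_decomp hagree n hn
      rw [sea_sortedSeg_eq, sea_sortedSeg_eq, hT1, hT2]
      exact sea_msort_add_lt T _ _ (by simp) hMlt
    constructor
    · exact (hR' x y).mpr (Or.inr ⟨hceq, M, fun n hn => le_of_lt (hstrict n hn)⟩)
    · intro hyx
      rcases (hR' y x).mp hyx with h | ⟨_, N, hN⟩
      · exact absurd (hceq ▸ h) (lt_irrefl _)
      · have h1' := hN (max N M) (le_max_left _ _)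
        have h2' := hstrict (max N M) (le_max_right _ _)
        exact absurd h1' (not_le.mpr h2')
end
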